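/- Let w be a block predominant permutation with maximal corner (r,s), v = w·t_{r,w^{-1}(s)}, and Φ(v,r) = {u^{(1)}, …, u^{(k)}}. Fix a diagonal term order on R. Then J_v ⊆ J_w, and J_v ⊆ J_{u^{(i)}} for each 1 ≤ i ≤ k. -/

import Mathlib

open scoped Classical
noncomputable section

/-! ## Partial permutation matrices (1-indexed) -/

/-- A partial permutation: an `rows × cols` 0-1 matrix (1-indexed) with at most one 1
in each row and in each column.  `mat i j` expresses that there is a 1 in cell `(i,j)`. -/
structure PartialPerm where
  rows : ℕ
  cols : ℕ
  mat : ℕ → ℕ → Prop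
  mat_support : ∀ i j, mat i j → 1 ≤ i ∧ i ≤ rows ∧ 1 ≤ j ∧ j ≤ cols
  mat_row : ∀ i j j', mat i j → mat i j' → j = j'
  mat_col : ∀ i i' j, mat i j → mat i' j → i = i'

namespace PartialPerm

/-- The Rothe diagram of a partial permutation. -/
def diagram (w : PartialPerm) : Set (ℕ × ℕ) :=
  {p | 1 ≤ p.1 ∧ p.1 ≤ w.rows ∧ 1 ≤ p.2 ∧ p.2 ≤ w.cols ∧
    (∀ j', j' ≤ p.2 → ¬ w.mat p.1 j') ∧ (∀ i', i' ≤ p.1 → ¬ w.mat i' p.2)}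

/-- The rank function: the number of 1's in the top-left `i × j` submatrix. -/
def rank (w : PartialPerm) (i j : ℕ) : ℕ :=
  Set.ncard {p : ℕ × ℕ | p.1 ≤ i ∧ p.2 ≤ j ∧ w.mat p.1 p.2}

/-- The essential set. -/
def ess (w : PartialPerm) : Set (ℕ × ℕ) :=
  {p | p ∈ w.diagram ∧ (p.1 + 1, p.2) ∉ w.diagram ∧ (p.1, p.2 + 1) ∉ w.diagram}

/-- The dominant part of the Rothe diagram. -/
def domPart (w : PartialPerm) : Set (ℕ × ℕ) :=
  {p | p ∈ w.diagram ∧ w.rank p.1 p.2 = 0}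

/-- `Ess'(w) = Ess(w) \ Dom(w)`. -/
def essPrime (w : PartialPerm) : Set (ℕ × ℕ) := w.ess \ w.domPart

/-- The Lehmer code: the number of diagram cells in row `i`. -/
def code (w : PartialPerm) (i : ℕ) : ℕ := Set.ncard {j | (i, j) ∈ w.diagram}

/-- Transpose of a partial permutation. -/
def transpose (w : PartialPerm) : PartialPerm where
  rows := w.cols
  cols := w.rows
  mat i j := w.mat j i
  mat_support := fun i j h => by
    obtain ⟨h1, h2, h3, h4⟩ := w.mat_support j i h
    exact ⟨h3, h4, h1, h2⟩
  mat_row := fun i j j' h h' => w.mat_col j j' i h h'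
  mat_col := fun i i' j h h' => w.mat_row j i i' h h'

/-- `w` is (the matrix of) a permutation in `S_n`. -/
def IsPerm (n : ℕ) (w : PartialPerm) : Prop :=
  w.rows = n ∧ w.cols = n ∧ (∀ i, 1 ≤ i → i ≤ n → ∃ j, w.mat i j) ∧
    (∀ j, 1 ≤ j → j ≤ n → ∃ i, w.mat i j)

/-- `w'` is the completion of the partial permutation `w` to a permutation in `S_N`:
it extends `w` and has the same Rothe diagram. -/
def IsCompletion (w : PartialPerm) (N : ℕ) (w' : PartialPerm) : Prop :=
  IsPerm N w' ∧ w.rows ≤ N ∧ w.cols ≤ N ∧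
    (∀ i j, 1 ≤ i → i ≤ w.rows → 1 ≤ j → j ≤ w.cols → (w.mat i j ↔ w'.mat i j)) ∧
    w'.diagram = w.diagram

end PartialPerm

/-! ## Right multiplication by a transposition -/

/-- The transposition of `a` and `b` as a function on `ℕ`. -/
def swapNat (a b i : ℕ) : ℕ := if i = a then b else if i = b then a else i

lemma swapNat_invol (a b i : ℕ) : swapNat a b (swapNat a b i) = i := by
  simp only [swapNat]; split_ifs <;> omega

/-- The product `w · t_{ab}` with the transposition `t_{ab}` (so row `i` of the product
is row `swapNat a b i` of `w`). -/
def mulT (w : PartialPerm) (a b : ℕ) : PartialPerm where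
  rows := w.rows
  cols := w.cols
  mat i j := 1 ≤ i ∧ i ≤ w.rows ∧ w.mat (swapNat a b i) j
  mat_support := fun i j h =>
    ⟨h.1, h.2.1, (w.mat_support _ _ h.2.2).2.2.1, (w.mat_support _ _ h.2.2).2.2.2⟩
  mat_row := fun i j j' h h' => w.mat_row _ j j' h.2.2 h'.2.2
  mat_col := fun i i' j h h' => by
    have hs : swapNat a b i = swapNat a b i' := w.mat_col _ _ j h.2.2 h'.2.2
    have := congrArg (swapNat a b) hs
    rwa [swapNat_invol, swapNat_invol] at this

/-- The partial permutation obtained from `w` by deleting the dot at `(i0, j0)`. -/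
def removeDot (w : PartialPerm) (i0 j0 : ℕ) : PartialPerm where
  rows := w.rows
  cols := w.cols
  mat i j := w.mat i j ∧ ¬(i = i0 ∧ j = j0)
  mat_support := fun i j h => w.mat_support i j h.1
  mat_row := fun i j j' h h' => w.mat_row i j j' h.1 h'.1
  mat_col := fun i i' j h h' => w.mat_col i i' j h.1 h'.1

/-! ## Bruhat order, transitions -/

/-- Bruhat order via rank functions: `v ≤ w` iff `r_v ≥ r_w` pointwise. -/
def bruhatLE (v w : PartialPerm) : Prop := ∀ i j, w.rank i j ≤ v.rank i j

def bruhatLT (v w : PartialPerm) : Prop := bruhatLE v w ∧ v ≠ w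

/-- Covering relation of Bruhat order on `S_n`. -/
def bruhatCov (n : ℕ) (v w : PartialPerm) : Prop :=
  bruhatLT v w ∧ ∀ u, PartialPerm.IsPerm n u → bruhatLT v u → bruhatLT u w → False

/-- `I(v,r) = {i < r : v ⋖ v t_{ir}}`. -/
def IsetI (n : ℕ) (v : PartialPerm) (r : ℕ) : Set ℕ :=
  {i | 1 ≤ i ∧ i < r ∧ bruhatCov n v (mulT v i r)}

/-- `Φ(v,r) = {v t_{ir} : i ∈ I(v,r)}`. -/
def PhiSet (n : ℕ) (v : PartialPerm) (r : ℕ) : Set PartialPerm :=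
  {u | ∃ i ∈ IsetI n v r, u = mulT v i r}

/-- Lexicographic order on cells. -/
def lexLE (p q : ℕ × ℕ) : Prop := p.1 < q.1 ∨ (p.1 = q.1 ∧ p.2 ≤ q.2)

/-- `(r,s)` is the (lexicographically) maximal corner of `D_w`. -/
def IsMaxCorner (w : PartialPerm) (r s : ℕ) : Prop :=
  (r, s) ∈ w.diagram ∧ ∀ p ∈ w.diagram, lexLE p (r, s)

/-- `(i,j)` is an inversion of `w`. -/
def IsInversion (w : PartialPerm) (p : ℕ × ℕ) : Prop :=
  p.1 < p.2 ∧ ∃ a b, w.mat p.1 a ∧ w.mat p.2 b ∧ b < a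

/-- The dot `(i,j)` of `w` is a pivot with respect to the maximal corner `(r,s)`:
it lies strictly northwest of `(r,s)` and is maximally southeast among such dots. -/
def IsPivot (w : PartialPerm) (r s i j : ℕ) : Prop :=
  w.mat i j ∧ i < r ∧ j < s ∧
    ∀ i' j', w.mat i' j' → i' < r → j' < s → i ≤ i' → j ≤ j' → i = i' ∧ j = j'

/-- The marching operation `w →^i u` of Knutson and Yong at the pivot in row `i`:
the lines emanating from the pivot dot are removed, and every diagram cell in the
rectangle spanned by the pivot and the maximal corner moves strictly to the northwest,
filling a position vacated either by the removed lines or by another cell. -/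
def Marches (w : PartialPerm) (i : ℕ) (u : PartialPerm) : Prop :=
  ∃ r s j0, IsMaxCorner w r s ∧ w.mat i j0 ∧ IsPivot w r s i j0 ∧
    u.rows = w.rows ∧ u.cols = w.cols ∧ PartialPerm.IsPerm w.rows u ∧
    (let R : Set (ℕ × ℕ) := w.diagram ∩ Set.Icc (i, j0) (r, s);
     ∃ θ : ℕ × ℕ → ℕ × ℕ, Set.InjOn θ R ∧
        (∀ c ∈ R, θ c ≠ c ∧ (θ c).1 ≤ c.1 ∧ (θ c).2 ≤ c.2 ∧
          (θ c ∈ (removeDot w i j0).diagram \ w.diagram ∨ θ c ∈ R)) ∧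
        u.diagram = (w.diagram \ R) ∪ θ '' R)

/-! ## Block sums and classes of (partial) permutations -/

/-- `w` is the block sum `u ⊞ v`. -/
def IsBlockSum (u v w : PartialPerm) : Prop :=
  w.rows = v.rows + u.rows ∧ w.cols = u.cols + v.cols ∧
  w.diagram =
    {p : ℕ × ℕ | 1 ≤ p.1 ∧ p.1 ≤ v.rows ∧ 1 ≤ p.2 ∧ p.2 ≤ u.cols}
    ∪ (fun p : ℕ × ℕ => (p.1, p.2 + u.cols)) '' v.diagram
    ∪ (fun p : ℕ × ℕ => (p.1 + v.rows, p.2)) '' u.diagram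

/-- `w` is the iterated block sum `u₁ ⊞ (u₂ ⊞ (⋯ ⊞ u_k))` of a nonempty list. -/
inductive IsBlockSumList : List PartialPerm → PartialPerm → Prop
  | single (u : PartialPerm) : IsBlockSumList [u] u
  | cons (u : PartialPerm) {us : List PartialPerm} {v w : PartialPerm} :
      IsBlockSumList us v → IsBlockSum u v w → IsBlockSumList (u :: us) w

/-- A partial permutation is predominant if its Lehmer code has the form
`(λ₁, …, λ_k, 0^h, ℓ, 0, 0, …)` for a partition `λ` and `h, ℓ ≥ 0`. -/
def IsPredominant (w : PartialPerm) : Prop :=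
  ∃ k h ℓ : ℕ,
    (∀ i i', 1 ≤ i → i ≤ i' → i' ≤ k → w.code i' ≤ w.code i) ∧
    (∀ i, k < i → i < k + h + 1 → w.code i = 0) ∧
    w.code (k + h + 1) = ℓ ∧
    (∀ i, k + h + 1 < i → w.code i = 0)

/-- A partial permutation is copredominant if its transpose is predominant. -/
def IsCopredominant (w : PartialPerm) : Prop := IsPredominant w.transpose

/-- A partial permutation is vexillary if the rows of its Rothe diagram are totally
ordered by inclusion. -/
def IsVexillary (w : PartialPerm) : Prop :=
  ∀ i i', {j | (i, j) ∈ w.diagram} ⊆ {j | (i', j) ∈ w.diagram} ∨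
    {j | (i', j) ∈ w.diagram} ⊆ {j | (i, j) ∈ w.diagram}

/-- A partial permutation is block predominant if it is a block sum of finitely many
predominant partial permutations. -/
def IsBlockPredominant (w : PartialPerm) : Prop :=
  ∃ L : List PartialPerm, (∀ u ∈ L, IsPredominant u) ∧ IsBlockSumList L w

/-- A permutation `w ∈ S_n` is block predominant. -/
def IsBlockPredominantPerm (n : ℕ) (w : PartialPerm) : Prop :=
  PartialPerm.IsPerm n w ∧
    ∃ (L : List PartialPerm) (b : PartialPerm),
      (∀ u ∈ L, IsPredominant u) ∧ IsBlockSumList L b ∧ PartialPerm.IsCompletion b n w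

/-- A permutation `w ∈ S_n` is banner: it is (the completion of) a block sum of
predominant, copredominant and vexillary partial permutations. -/
def IsBanner (n : ℕ) (w : PartialPerm) : Prop :=
  PartialPerm.IsPerm n w ∧
    ∃ (L : List PartialPerm) (b : PartialPerm),
      (∀ u ∈ L, IsPredominant u ∨ IsCopredominant u ∨ IsVexillary u) ∧
      IsBlockSumList L b ∧ PartialPerm.IsCompletion b n w

/-- A nonempty partial permutation. -/
def NonemptyPP (u : PartialPerm) : Prop := 0 < u.rows ∨ 0 < u.cols

/-- An indecomposable permutation: not (the completion of) a block sum of two nonempty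
predominant partial permutations. -/
def IsIndecomposable (n : ℕ) (w : PartialPerm) : Prop :=
  ¬ ∃ u v b, IsPredominant u ∧ IsPredominant v ∧ NonemptyPP u ∧ NonemptyPP v ∧
      IsBlockSum u v b ∧ PartialPerm.IsCompletion b n w

/-! ## The polynomial ring, minors, Schubert determinantal ideals -/

/-- The polynomial ring `ℂ[z_{ij} : i, j ≥ 1]` (all variables `z_{ij}`, `(i,j) : ℕ × ℕ`). -/
abbrev Rring : Type := MvPolynomial (ℕ × ℕ) ℂ

/-- The variable `z_{ij}`. -/
def zvar (i j : ℕ) : Rring := MvPolynomial.X (i, j)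

/-- The generic matrix `Z`. -/
def zmat : ℕ → ℕ → Rring := fun i j => zvar i j

/-- The generic matrix `Z^S` with the variables in positions `S` specialized to `0`. -/
def zmatAvoid (S : Set (ℕ × ℕ)) : ℕ → ℕ → Rring :=
  fun i j => if (i, j) ∈ S then 0 else zvar i j

/-- The set of `k × k` minors of the top-left `i × j` submatrix of the matrix `f`. -/
def minorsIn (f : ℕ → ℕ → Rring) (k i j : ℕ) : Set Rring :=
  {g | ∃ rs cs : Fin k → ℕ, StrictMono rs ∧ StrictMono cs ∧
    (∀ a, 1 ≤ rs a ∧ rs a ≤ i) ∧ (∀ a, 1 ≤ cs a ∧ cs a ≤ j) ∧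
    g = Matrix.det (Matrix.of fun a b : Fin k => f (rs a) (cs b))}

/-- The Schubert determinantal ideal `I_w`. -/
def schubertIdeal (w : PartialPerm) : Ideal Rring :=
  Ideal.span {g | ∃ i j, 1 ≤ i ∧ i ≤ w.rows ∧ 1 ≤ j ∧ j ≤ w.cols ∧
    g ∈ minorsIn zmat (w.rank i j + 1) i j}

/-- The CDG generators of `I_w`. -/
def cdgGens (w : PartialPerm) : Set Rring :=
  {g | ∃ p ∈ w.domPart, g = zvar p.1 p.2} ∪
  {g | ∃ p ∈ w.essPrime, g ∈ minorsIn (zmatAvoid w.domPart) (w.rank p.1 p.2 + 1) p.1 p.2}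

/-! ## Monomial orders, initial ideals, Gröbner bases -/

/-- A monomial order on monomials in variables `σ`. -/
structure MonomialOrd (σ : Type) where
  le : (σ →₀ ℕ) → (σ →₀ ℕ) → Prop
  le_refl : ∀ a, le a a
  le_trans : ∀ a b c, le a b → le b c → le a c
  le_antisymm : ∀ a b, le a b → le b a → a = b
  le_total : ∀ a b, le a b ∨ le b a
  add_le_add : ∀ a b c, le a b → le (a + c) (b + c)
  zero_le : ∀ a, le 0 a

/-- `t` is the initial term of `f` with respect to the monomial order `ord`. -/
def IsInitTerm {σ : Type} (ord : MonomialOrd σ) (f t : MvPolynomial σ ℂ) : Prop :=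
  ∃ m ∈ f.support, (∀ m' ∈ f.support, ord.le m' m) ∧
    t = MvPolynomial.monomial m (MvPolynomial.coeff m f)

/-- The ideal generated by the initial terms of the members of `G`. -/
def initSpan {σ : Type} (ord : MonomialOrd σ) (G : Set (MvPolynomial σ ℂ)) :
    Ideal (MvPolynomial σ ℂ) :=
  Ideal.span {t | ∃ g ∈ G, IsInitTerm ord g t}

/-- The initial ideal of an ideal. -/
def initialIdeal {σ : Type} (ord : MonomialOrd σ) (I : Ideal (MvPolynomial σ ℂ)) :
    Ideal (MvPolynomial σ ℂ) :=
  initSpan ord (I : Set (MvPolynomial σ ℂ))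

/-- `G` is a Gröbner basis of `I` with respect to `ord`. -/
def IsGroebner {σ : Type} (ord : MonomialOrd σ) (G : Set (MvPolynomial σ ℂ))
    (I : Ideal (MvPolynomial σ ℂ)) : Prop :=
  G ⊆ (I : Set (MvPolynomial σ ℂ)) ∧ initSpan ord G = initialIdeal ord I

/-- A diagonal term order: the initial term of the determinant of any square submatrix
of `Z` is the product of the entries on its main diagonal. -/
def IsDiagonalOrder (ord : MonomialOrd (ℕ × ℕ)) : Prop :=
  ∀ (k : ℕ) (rs cs : Fin k → ℕ), StrictMono rs → StrictMono cs →
    (∀ a, 1 ≤ rs a) → (∀ a, 1 ≤ cs a) →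
    IsInitTerm ord (Matrix.det (Matrix.of fun a b : Fin k => zmat (rs a) (cs b)))
      (∏ a, zvar (rs a) (cs a))

/-- `w` is CDG: the CDG generators are a Gröbner basis of `I_w` for every diagonal
term order. -/
def IsCDG (w : PartialPerm) : Prop :=
  ∀ ord : MonomialOrd (ℕ × ℕ), IsDiagonalOrder ord →
    IsGroebner ord (cdgGens w) (schubertIdeal w)

/-- `J_w`: the monomial ideal generated by the initial terms of the CDG generators. -/
def Jideal (ord : MonomialOrd (ℕ × ℕ)) (w : PartialPerm) : Ideal Rring :=
  initSpan ord (cdgGens w)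

/-- The initial terms of the nonzero maximal minors of `Z^S_{[i],[j]}`. -/
def JlamGens (ord : MonomialOrd (ℕ × ℕ)) (S : Set (ℕ × ℕ)) (i j : ℕ) : Set Rring :=
  {t | ∃ g ∈ minorsIn (zmatAvoid S) (min i j) i j, g ≠ 0 ∧ IsInitTerm ord g t}

/-- `J^λ_{ij}`: the ideal generated by the initial terms of the nonzero maximal minors
of `Z^λ_{[i],[j]}`. -/
def Jlam (ord : MonomialOrd (ℕ × ℕ)) (S : Set (ℕ × ℕ)) (i j : ℕ) : Ideal Rring :=
  Ideal.span (JlamGens ord S i j)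

/-- The pullback of a monomial order along the variable shift
`z_{ij} ↦ z_{i+a, j+b}`; this is the order induced on the variables of a block. -/
def MonomialOrd.pullback (ord : MonomialOrd (ℕ × ℕ)) (a b : ℕ) : MonomialOrd (ℕ × ℕ) where
  le m m' := ord.le (Finsupp.mapDomain (fun p : ℕ × ℕ => (p.1 + a, p.2 + b)) m)
    (Finsupp.mapDomain (fun p : ℕ × ℕ => (p.1 + a, p.2 + b)) m')
  le_refl := fun _ => ord.le_refl _
  le_trans := fun _ _ _ h h' => ord.le_trans _ _ _ h h'
  le_antisymm := fun x y h h' => by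
    have hinj : Function.Injective (fun p : ℕ × ℕ => (p.1 + a, p.2 + b)) := by
      intro p q hpq
      simp only [Prod.mk.injEq] at hpq
      exact Prod.ext (by omega) (by omega)
    exact Finsupp.mapDomain_injective hinj (ord.le_antisymm _ _ h h')
  le_total := fun _ _ => ord.le_total _ _
  add_le_add := fun x y c h => by
    simpa only [Finsupp.mapDomain_add] using ord.add_le_add _ _ _ h
  zero_le := fun x => by
    simpa only [Finsupp.mapDomain_zero] using ord.zero_le _

/-- The substitution `↓_a : z_{ij} ↦ z_{i+a, j}`. -/
def vshiftP (a : ℕ) : Rring → Rring :=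
  MvPolynomial.rename (fun p : ℕ × ℕ => (p.1 + a, p.2))

/-- The substitution `→_b : z_{ij} ↦ z_{i, j+b}`. -/
def hshiftP (b : ℕ) : Rring → Rring :=
  MvPolynomial.rename (fun p : ℕ × ℕ => (p.1, p.2 + b))

/-! ## Bumpless pipe dreams -/

/-- The six tiles. -/
inductive Tile
  | blank | cross | horiz | vert | se | nw
deriving DecidableEq

namespace Tile

/-- The tile has a pipe segment reaching its north edge. -/
def hasN : Tile → Bool | .cross => true | .vert => true | .nw => true | _ => false
/-- The tile has a pipe segment reaching its south edge. -/
def hasS : Tile → Bool | .cross => true | .vert => true | .se => true | _ => false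
/-- The tile has a pipe segment reaching its east edge. -/
def hasE : Tile → Bool | .cross => true | .horiz => true | .se => true | _ => false
/-- The tile has a pipe segment reaching its west edge. -/
def hasW : Tile → Bool | .cross => true | .horiz => true | .nw => true | _ => false

end Tile

/-- Directions of travel of a pipe. -/
inductive PDir
  | south | west
deriving DecidableEq

/-- One step of a pipe traversal in the tiling `T` of the `n × n` grid:
the state `(i, j, d)` means the pipe is traversing tile `(i,j)` moving in direction `d`;
`Sum.inr c` means the pipe has exited through the bottom edge in column `c`. -/
def pipeStep (T : ℕ → ℕ → Tile) (n : ℕ) : ℕ × ℕ × PDir → (ℕ × ℕ × PDir) ⊕ ℕ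
  | (i, j, PDir.west) =>
      match T i j with
      | Tile.se => if i = n then Sum.inr j else Sum.inl (i + 1, j, PDir.south)
      | _ => Sum.inl (i, j - 1, PDir.west)
  | (i, j, PDir.south) =>
      match T i j with
      | Tile.nw => Sum.inl (i, j - 1, PDir.west)
      | _ => if i = n then Sum.inr j else Sum.inl (i + 1, j, PDir.south)

/-- The state of the pipe entering at the right edge of row `i` after `k` steps. -/
def pipeState (T : ℕ → ℕ → Tile) (n i k : ℕ) : (ℕ × ℕ × PDir) ⊕ ℕ :=
  (Sum.elim (pipeStep T n) Sum.inr)^[k] (Sum.inl (i, n, PDir.west))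

/-- The pipe entering at the right edge of row `i` visits the cell `p`. -/
def pipeVisits (T : ℕ → ℕ → Tile) (n i : ℕ) (p : ℕ × ℕ) : Prop :=
  ∃ k d, pipeState T n i k = Sum.inl (p.1, p.2, d)

/-- A bumpless pipe dream on the `n × n` grid (1-indexed): a tiling by the six tiles
such that pipes enter at the right edge, exit at the bottom edge, and pairwise cross
at most once. -/
structure BPD (n : ℕ) where
  T : ℕ → ℕ → Tile
  outside : ∀ i j, (i = 0 ∨ j = 0 ∨ n < i ∨ n < j) → T i j = Tile.blank
  matchH : ∀ i j, 1 ≤ i → i ≤ n → 1 ≤ j → j < n → (T i j).hasE = (T i (j + 1)).hasW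
  matchV : ∀ i j, 1 ≤ i → i < n → 1 ≤ j → j ≤ n → (T i j).hasS = (T (i + 1) j).hasN
  leftB : ∀ i, 1 ≤ i → i ≤ n → (T i 1).hasW = false
  topB : ∀ j, 1 ≤ j → j ≤ n → (T 1 j).hasN = false
  rightB : ∀ i, 1 ≤ i → i ≤ n → (T i n).hasE = true
  botB : ∀ j, 1 ≤ j → j ≤ n → (T n j).hasS = true
  exits : ∀ i, 1 ≤ i → i ≤ n → ∃ k c, pipeState T n i k = Sum.inr c
  reduced : ∀ i i', 1 ≤ i → i < i' → i' ≤ n →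
    {p : ℕ × ℕ | pipeVisits T n i p ∧ pipeVisits T n i' p ∧
      T p.1 p.2 = Tile.cross}.Subsingleton

/-- The diagram of a bumpless pipe dream: its blank tiles. -/
def BPD.diag {n : ℕ} (P : BPD n) : Set (ℕ × ℕ) :=
  {p | 1 ≤ p.1 ∧ p.1 ≤ n ∧ 1 ≤ p.2 ∧ p.2 ≤ n ∧ P.T p.1 p.2 = Tile.blank}

/-- `BPD(w)`: the bumpless pipe dreams whose pipe entering in row `i` exits in the
column of the 1 of `w` in row `i`. -/
def bpdSet (n : ℕ) (w : PartialPerm) : Set (BPD n) :=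
  {P | ∀ i, 1 ≤ i → i ≤ n → ∃ k j, pipeState P.T n i k = Sum.inr j ∧ w.mat i j}

/-- The ideal `L_P = ⟨z_{ij} : (i,j) ∈ D(P)⟩`. -/
def linIdeal {n : ℕ} (P : BPD n) : Ideal Rring :=
  Ideal.span {g | ∃ p ∈ P.diag, g = zvar p.1 p.2}

/-- Restriction of a tiling to the first `m` rows and `n` columns. -/
def restrictT (T : ℕ → ℕ → Tile) (m n : ℕ) : ℕ → ℕ → Tile :=
  fun i j => if 1 ≤ i ∧ i ≤ m ∧ 1 ≤ j ∧ j ≤ n then T i j else Tile.blank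

/-- `BPD(w)` for a partial permutation `w`: the restrictions to the first
`w.rows` rows and `w.cols` columns of bumpless pipe dreams of the completion of `w`. -/
def bpdPSet (w : PartialPerm) : Set (ℕ → ℕ → Tile) :=
  {Q | ∃ (N : ℕ) (w' : PartialPerm) (P : BPD N),
    PartialPerm.IsCompletion w N w' ∧ P ∈ bpdSet N w' ∧ Q = restrictT P.T w.rows w.cols}

/-- The diagram of a restricted tiling on an `m × n` grid. -/
def pdiag (m n : ℕ) (Q : ℕ → ℕ → Tile) : Set (ℕ × ℕ) :=
  {p | 1 ≤ p.1 ∧ p.1 ≤ m ∧ 1 ≤ p.2 ∧ p.2 ≤ n ∧ Q p.1 p.2 = Tile.blank}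

/-- `L_P` for a restricted tiling. -/
def plinIdeal (w : PartialPerm) (Q : ℕ → ℕ → Tile) : Ideal Rring :=
  Ideal.span {g | ∃ p ∈ pdiag w.rows w.cols Q, g = zvar p.1 p.2}

/-! ## Double Schubert polynomials via bumpless pipe dreams -/

/-- The weight of a bumpless pipe dream: `∏_{(i,j) ∈ D(P)} (x_i - y_j)`, in
`ℤ[x, y]` where `x_i` is `X (Sum.inl i)` and `y_j` is `X (Sum.inr j)`. -/
def wtBPD {n : ℕ} (P : BPD n) : MvPolynomial (ℕ ⊕ ℕ) ℤ :=
  ∏ p ∈ (Finset.Icc 1 n ×ˢ Finset.Icc 1 n).filter (fun p => P.T p.1 p.2 = Tile.blank),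
    (MvPolynomial.X (Sum.inl p.1) - MvPolynomial.X (Sum.inr p.2))

/-- The double Schubert polynomial, defined via bumpless pipe dreams. -/
def schubPoly (n : ℕ) (w : PartialPerm) : MvPolynomial (ℕ ⊕ ℕ) ℤ :=
  ∑ᶠ P ∈ bpdSet n w, wtBPD P

end



noncomputable section
open MvPolynomial
namespace JvAux

section


/-- The rank set. -/
def rset (x : PartialPerm) (i j : ℕ) : Set (ℕ × ℕ) :=
  {p : ℕ × ℕ | p.1 ≤ i ∧ p.2 ≤ j ∧ x.mat p.1 p.2}

lemma rank_eq (x : PartialPerm) (i j : ℕ) : x.rank i j = (rset x i j).ncard := rfl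

lemma rset_finite (x : PartialPerm) (i j : ℕ) : (rset x i j).Finite := by
  apply Set.Finite.subset (Set.finite_Icc (1,1) (x.rows, x.cols))
  rintro ⟨a,b⟩ ⟨h1,h2,h3⟩
  obtain ⟨g1,g2,g3,g4⟩ := x.mat_support a b h3
  constructor <;> simp [Prod.le_def] <;> omega

lemma rank_mono (x : PartialPerm) {i j i' j' : ℕ} (hi : i ≤ i') (hj : j ≤ j') :
    x.rank i j ≤ x.rank i' j' := by
  rw [rank_eq, rank_eq]
  exact Set.ncard_le_ncard (fun p hp => ⟨hp.1.trans hi, hp.2.1.trans hj, hp.2.2⟩)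
    (rset_finite x i' j')

lemma rank_zero (x : PartialPerm) (j : ℕ) : x.rank 0 j = 0 := by
  rw [rank_eq, Set.ncard_eq_zero (rset_finite x 0 j)]
  ext ⟨a,b⟩
  simp only [rset, Set.mem_setOf_eq, Set.mem_empty_iff_false, iff_false, not_and]
  intro h1 h2 h3
  have := (x.mat_support a b h3).1; omega

lemma rank_zero_col (x : PartialPerm) (i : ℕ) : x.rank i 0 = 0 := by
  rw [rank_eq, Set.ncard_eq_zero (rset_finite x i 0)]
  ext ⟨a,b⟩
  simp only [rset, Set.mem_setOf_eq, Set.mem_empty_iff_false, iff_false, not_and]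
  intro h1 h2 h3
  have := (x.mat_support a b h3).2.2.1; omega

/-- Row recursion for rank, with a dot in range. -/
lemma rank_succ_row_dot (x : PartialPerm) {i j b : ℕ} (hi : 1 ≤ i)
    (hb : b ≤ j) (hd : x.mat i b) : x.rank i j = x.rank (i-1) j + 1 := by
  rw [rank_eq, rank_eq]
  have hsplit : rset x i j = rset x (i-1) j ∪ {(i, b)} := by
    ext ⟨a,y⟩
    simp only [rset, Set.mem_setOf_eq, Set.mem_union, Set.mem_singleton_iff, Prod.mk.injEq]
    constructor
    · rintro ⟨h1,h2,h3⟩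
      rcases Nat.lt_or_ge a i with h | h
      · exact Or.inl ⟨by omega, h2, h3⟩
      · have ha : a = i := by omega
        subst ha
        exact Or.inr ⟨rfl, (x.mat_row a y b h3 hd).symm ▸ rfl⟩
    · rintro (⟨h1,h2,h3⟩ | ⟨h1,h2⟩)
      · exact ⟨by omega, h2, h3⟩
      · subst h1; subst h2; exact ⟨le_refl _, hb, hd⟩
  rw [hsplit, Set.ncard_union_eq ?_ (rset_finite x (i-1) j) (Set.finite_singleton _),
    Set.ncard_singleton]
  · rw [Set.disjoint_singleton_right]
    rintro ⟨h1,_,_⟩; omega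

/-- Row recursion for rank, no dot in range. -/
lemma rank_succ_row_nodot (x : PartialPerm) {i j : ℕ}
    (hd : ∀ b, b ≤ j → ¬ x.mat i b) : x.rank i j = x.rank (i-1) j := by
  rw [rank_eq, rank_eq]
  congr 1
  ext ⟨a,y⟩
  simp only [rset, Set.mem_setOf_eq]
  constructor
  · rintro ⟨h1,h2,h3⟩
    refine ⟨?_, h2, h3⟩
    rcases Nat.lt_or_ge a i with h | h
    · omega
    · have : a = i := by omega
      subst this; exact absurd h3 (hd y h2)
  · rintro ⟨h1,h2,h3⟩; exact ⟨by omega, h2, h3⟩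

/-- Column recursion for rank, with a dot in range. -/
lemma rank_succ_col_dot (x : PartialPerm) {i j a : ℕ} (hj : 1 ≤ j)
    (ha : a ≤ i) (hd : x.mat a j) : x.rank i j = x.rank i (j-1) + 1 := by
  rw [rank_eq, rank_eq]
  have hsplit : rset x i j = rset x i (j-1) ∪ {(a, j)} := by
    ext ⟨z,y⟩
    simp only [rset, Set.mem_setOf_eq, Set.mem_union, Set.mem_singleton_iff, Prod.mk.injEq]
    constructor
    · rintro ⟨h1,h2,h3⟩
      rcases Nat.lt_or_ge y j with h | h
      · exact Or.inl ⟨h1, by omega, h3⟩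
      · have hy : y = j := by omega
        subst hy
        exact Or.inr ⟨(x.mat_col z a y h3 hd), rfl⟩
    · rintro (⟨h1,h2,h3⟩ | ⟨h1,h2⟩)
      · exact ⟨h1, by omega, h3⟩
      · subst h1; subst h2; exact ⟨ha, le_refl _, hd⟩
  rw [hsplit, Set.ncard_union_eq ?_ (rset_finite x i (j-1)) (Set.finite_singleton _),
    Set.ncard_singleton]
  · rw [Set.disjoint_singleton_right]
    rintro ⟨_,h2,_⟩; omega

/-- Column recursion for rank, no dot in range. -/
lemma rank_succ_col_nodot (x : PartialPerm) {i j : ℕ}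
    (hd : ∀ a, a ≤ i → ¬ x.mat a j) : x.rank i j = x.rank i (j-1) := by
  rw [rank_eq, rank_eq]
  congr 1
  ext ⟨z,y⟩
  simp only [rset, Set.mem_setOf_eq]
  constructor
  · rintro ⟨h1,h2,h3⟩
    refine ⟨h1, ?_, h3⟩
    rcases Nat.lt_or_ge y j with h | h
    · omega
    · have : y = j := by omega
      subst this; exact absurd h3 (hd z h1)
  · rintro ⟨h1,h2,h3⟩; exact ⟨h1, by omega, h3⟩



lemma swapNat_left (a b : ℕ) : swapNat a b a = b := by
  simp only [swapNat]; split_ifs <;> omega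
lemma swapNat_right (a b : ℕ) (h : a ≠ b) : swapNat a b b = a := by
  simp only [swapNat]; split_ifs <;> omega
lemma swapNat_other {a b i : ℕ} (h1 : i ≠ a) (h2 : i ≠ b) : swapNat a b i = i := by
  simp only [swapNat, if_neg h1, if_neg h2]
lemma swapNat_bounds {a b i m : ℕ} (ha1 : 1 ≤ a) (ha2 : a ≤ m) (hb1 : 1 ≤ b) (hb2 : b ≤ m)
    (hi1 : 1 ≤ i) (hi2 : i ≤ m) : 1 ≤ swapNat a b i ∧ swapNat a b i ≤ m := by
  simp only [swapNat]; split_ifs <;> omega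

lemma pp_ext {x y : PartialPerm} (hr : x.rows = y.rows) (hc : x.cols = y.cols)
    (hm : ∀ i j, x.mat i j ↔ y.mat i j) : x = y := by
  obtain ⟨r1, c1, m1, p1, q1, w1⟩ := x
  obtain ⟨r2, c2, m2, p2, q2, w2⟩ := y
  simp only at hr hc hm
  subst hr; subst hc
  have : m1 = m2 := funext fun i => funext fun j => propext (hm i j)
  subst this
  rfl

/-- membership for mulT -/
lemma mulT_mat {x : PartialPerm} {a b i j : ℕ} :
    (mulT x a b).mat i j ↔ 1 ≤ i ∧ i ≤ x.rows ∧ x.mat (swapNat a b i) j := Iff.rfl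

lemma mulT_rows (x : PartialPerm) (a b : ℕ) : (mulT x a b).rows = x.rows := rfl
lemma mulT_cols (x : PartialPerm) (a b : ℕ) : (mulT x a b).cols = x.cols := rfl

/-- mulT is an involution (given the two indices are within bounds). -/
lemma mulT_mulT (x : PartialPerm) {a b : ℕ} (ha1 : 1 ≤ a) (ha2 : a ≤ x.rows)
    (hb1 : 1 ≤ b) (hb2 : b ≤ x.rows) : mulT (mulT x a b) a b = x := by
  refine pp_ext rfl rfl (fun i j => ?_)
  rw [mulT_mat, mulT_mat, mulT_rows, swapNat_invol]
  constructor
  · rintro ⟨_, _, _, _, h⟩; exact h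
  · intro h
    obtain ⟨h1, h2, _, _⟩ := x.mat_support i j h
    exact ⟨h1, h2, (swapNat_bounds ha1 ha2 hb1 hb2 h1 h2).1,
      (swapNat_bounds ha1 ha2 hb1 hb2 h1 h2).2, h⟩

/-- mulT of a permutation is a permutation. -/
lemma mulT_isPerm {x : PartialPerm} {n : ℕ} (hx : x.IsPerm n) (a b : ℕ)
    (ha1 : 1 ≤ a) (ha2 : a ≤ n) (hb1 : 1 ≤ b) (hb2 : b ≤ n) :
    (mulT x a b).IsPerm n := by
  obtain ⟨hr, hc, hrow, hcol⟩ := hx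
  subst hr
  refine ⟨rfl, hc, ?_, ?_⟩
  · intro i h1 h2
    obtain ⟨j, hj⟩ := hrow (swapNat a b i) (swapNat_bounds ha1 ha2 hb1 hb2 h1 h2).1
      (swapNat_bounds ha1 ha2 hb1 hb2 h1 h2).2
    exact ⟨j, h1, h2, hj⟩
  · intro j h1 h2
    obtain ⟨i, hi⟩ := hcol j h1 h2
    obtain ⟨g1, g2, _, _⟩ := x.mat_support i j hi
    refine ⟨swapNat a b i, (swapNat_bounds ha1 ha2 hb1 hb2 g1 g2).1,
      (swapNat_bounds ha1 ha2 hb1 hb2 g1 g2).2, ?_⟩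
    rw [swapNat_invol]; exact hi

/-! Context for the main lemma -/

structure Ctx (n : ℕ) (v : PartialPerm) (i0 r' c s' : ℕ) : Prop where
  hv : v.IsPerm n
  hir : i0 < r'
  hc : v.mat i0 c
  hs : v.mat r' s'
  hcs : c < s'

namespace Ctx

variable {n : ℕ} {v : PartialPerm} {i0 r' c s' : ℕ}

lemma hi01 (H : Ctx n v i0 r' c s') : 1 ≤ i0 := (v.mat_support _ _ H.hc).1
lemma hi0n (H : Ctx n v i0 r' c s') : i0 ≤ n := H.hv.1 ▸ (v.mat_support _ _ H.hc).2.1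
lemma hr1 (H : Ctx n v i0 r' c s') : 1 ≤ r' := (v.mat_support _ _ H.hs).1
lemma hrn (H : Ctx n v i0 r' c s') : r' ≤ n := H.hv.1 ▸ (v.mat_support _ _ H.hs).2.1
lemma hc1 (H : Ctx n v i0 r' c s') : 1 ≤ c := (v.mat_support _ _ H.hc).2.2.1
lemma hcn (H : Ctx n v i0 r' c s') : c ≤ n := H.hv.2.1 ▸ (v.mat_support _ _ H.hc).2.2.2
lemma hs1 (H : Ctx n v i0 r' c s') : 1 ≤ s' := (v.mat_support _ _ H.hs).2.2.1
lemma hsn (H : Ctx n v i0 r' c s') : s' ≤ n := H.hv.2.1 ▸ (v.mat_support _ _ H.hs).2.2.2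

/-- the modified permutation -/
def u (_ : Ctx n v i0 r' c s') : PartialPerm := mulT v i0 r'

lemma u_isPerm (H : Ctx n v i0 r' c s') : H.u.IsPerm n :=
  mulT_isPerm H.hv i0 r' H.hi01 H.hi0n H.hr1 H.hrn

lemma u_rows (H : Ctx n v i0 r' c s') : H.u.rows = n := H.hv.1
lemma u_cols (H : Ctx n v i0 r' c s') : H.u.cols = n := H.hv.2.1

lemma u_mat (H : Ctx n v i0 r' c s') {i j : ℕ} :
    H.u.mat i j ↔ 1 ≤ i ∧ i ≤ n ∧ v.mat (swapNat i0 r' i) j := by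
  rw [u, mulT_mat, H.hv.1]

lemma u_mat_i0 (H : Ctx n v i0 r' c s') {j : ℕ} : H.u.mat i0 j ↔ j = s' := by
  rw [H.u_mat, swapNat_left]
  constructor
  · rintro ⟨_,_,h⟩; exact v.mat_row _ _ _ h H.hs
  · rintro rfl; exact ⟨H.hi01, H.hi0n, H.hs⟩

lemma u_mat_r' (H : Ctx n v i0 r' c s') {j : ℕ} : H.u.mat r' j ↔ j = c := by
  rw [H.u_mat, swapNat_right _ _ (Nat.ne_of_lt H.hir)]
  constructor
  · rintro ⟨_,_,h⟩; exact v.mat_row _ _ _ h H.hc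
  · rintro rfl; exact ⟨H.hr1, H.hrn, H.hc⟩

lemma u_mat_other (H : Ctx n v i0 r' c s') {i j : ℕ} (h1 : i ≠ i0) (h2 : i ≠ r') :
    H.u.mat i j ↔ v.mat i j := by
  rw [H.u_mat, swapNat_other h1 h2]
  constructor
  · rintro ⟨_,_,h⟩; exact h
  · intro h
    obtain ⟨g1,g2,_,_⟩ := v.mat_support i j h
    exact ⟨g1, H.hv.1 ▸ g2, h⟩



lemma rank_row_inc (x : PartialPerm) {i d : ℕ} (hi : 1 ≤ i) (hd : x.mat i d) (j : ℕ) :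
    x.rank i j = x.rank (i-1) j + (if d ≤ j then 1 else 0) := by
  split_ifs with h
  · exact rank_succ_row_dot x hi h hd
  · rw [Nat.add_zero]
    refine rank_succ_row_nodot x (fun b hb hmat => ?_)
    have := x.mat_row i b d hmat hd
    omega

lemma rank_row_empty (x : PartialPerm) {i : ℕ} (hd : ∀ b, ¬ x.mat i b) (j : ℕ) :
    x.rank i j = x.rank (i-1) j :=
  rank_succ_row_nodot x (fun b _ h => hd b h)

lemma rank_col_inc (x : PartialPerm) {j d : ℕ} (hj : 1 ≤ j) (hd : x.mat d j) (i : ℕ) :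
    x.rank i j = x.rank i (j-1) + (if d ≤ i then 1 else 0) := by
  split_ifs with h
  · exact rank_succ_col_dot x hj h hd
  · rw [Nat.add_zero]
    refine rank_succ_col_nodot x (fun a ha hmat => ?_)
    have := x.mat_col a d j hmat hd
    omega

lemma rank_col_empty (x : PartialPerm) {j : ℕ} (hd : ∀ a, ¬ x.mat a j) (i : ℕ) :
    x.rank i j = x.rank i (j-1) :=
  rank_succ_col_nodot x (fun a _ h => hd a h)

lemma v_nodot_high (H : Ctx n v i0 r' c s') {i : ℕ} (hi : n < i) (b : ℕ) : ¬ v.mat i b := by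
  intro h
  have h2 := (v.mat_support i b h).2.1
  have h3 := H.hv.1
  omega

lemma u_nodot_high (H : Ctx n v i0 r' c s') {i : ℕ} (hi : n < i) (b : ℕ) : ¬ H.u.mat i b :=
  fun h => by have := H.u_mat.mp h; omega

set_option maxHeartbeats 2000000 in
/-- The fundamental rank comparison identity. -/
lemma rank_id (H : Ctx n v i0 r' c s') (i j : ℕ) :
    H.u.rank i j + (if i0 ≤ i ∧ c ≤ j then 1 else 0) + (if r' ≤ i ∧ s' ≤ j then 1 else 0)
    = v.rank i j + (if i0 ≤ i ∧ s' ≤ j then 1 else 0) + (if r' ≤ i ∧ c ≤ j then 1 else 0) := by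
  have h1 := H.hi01; have h2 := H.hir; have h3 := H.hcs
  induction i with
  | zero =>
    rw [rank_zero, rank_zero]
    split_ifs <;> omega
  | succ i ih =>
    by_cases hio : i + 1 = i0
    · have hd1 : v.mat (i+1) c := by rw [hio]; exact H.hc
      have hd2 : H.u.mat (i+1) s' := by rw [hio]; exact H.u_mat_i0.mpr rfl
      have hvr := rank_row_inc v (i := i+1) (by omega) hd1 j
      have hur := rank_row_inc H.u (i := i+1) (by omega) hd2 j
      simp only [Nat.add_sub_cancel] at hvr hur
      rw [hvr, hur]
      split_ifs at ih ⊢ <;> omega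
    · by_cases hro : i + 1 = r'
      · have hd1 : v.mat (i+1) s' := by rw [hro]; exact H.hs
        have hd2 : H.u.mat (i+1) c := by rw [hro]; exact H.u_mat_r'.mpr rfl
        have hvr := rank_row_inc v (i := i+1) (by omega) hd1 j
        have hur := rank_row_inc H.u (i := i+1) (by omega) hd2 j
        simp only [Nat.add_sub_cancel] at hvr hur
        rw [hvr, hur]
        split_ifs at ih ⊢ <;> omega
      · by_cases hn : i + 1 ≤ n
        · obtain ⟨d, hd⟩ := H.hv.2.2.1 (i+1) (by omega) hn
          have hud : H.u.mat (i+1) d := (H.u_mat_other hio hro).mpr hd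
          have hvr := rank_row_inc v (i := i+1) (by omega) hd j
          have hur := rank_row_inc H.u (i := i+1) (by omega) hud j
          simp only [Nat.add_sub_cancel] at hvr hur
          rw [hvr, hur]
          split_ifs at ih ⊢ <;> omega
        · have hvr := rank_row_empty v (i := i+1) (H.v_nodot_high (by omega)) j
          have hur := rank_row_empty H.u (i := i+1) (H.u_nodot_high (by omega)) j
          simp only [Nat.add_sub_cancel] at hvr hur
          rw [hvr, hur]
          split_ifs at ih ⊢ <;> omega

/-- rank_u = rank_v outside the box B. -/
lemma rank_eq_of_notB (H : Ctx n v i0 r' c s') {i j : ℕ}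
    (h : ¬(i0 ≤ i ∧ i < r' ∧ c ≤ j ∧ j < s')) : H.u.rank i j = v.rank i j := by
  have key := H.rank_id i j
  have h1 := H.hi01; have h2 := H.hir; have h3 := H.hcs
  split_ifs at key <;> omega

/-- rank_u = rank_v - 1 inside the box B. -/
lemma rank_succ_of_B (H : Ctx n v i0 r' c s') {i j : ℕ}
    (h : i0 ≤ i ∧ i < r' ∧ c ≤ j ∧ j < s') : H.u.rank i j + 1 = v.rank i j := by
  have key := H.rank_id i j
  have h1 := H.hi01; have h2 := H.hir; have h3 := H.hcs
  split_ifs at key <;> omega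

lemma rank_u_le (H : Ctx n v i0 r' c s') (i j : ℕ) : H.u.rank i j ≤ v.rank i j := by
  have key := H.rank_id i j
  have h1 := H.hi01; have h2 := H.hir; have h3 := H.hcs
  split_ifs at key <;> omega

end Ctx


end

section

lemma ord_le_cancel (ord : MonomialOrd (ℕ × ℕ)) {a b c' : (ℕ×ℕ) →₀ ℕ}
    (h : ord.le (a + c') (b + c')) : ord.le a b := by
  rcases ord.le_total a b with h' | h'
  · exact h'
  · have h2 := ord.add_le_add b a c' h'
    have h3 : a + c' = b + c' := ord.le_antisymm _ _ h h2
    have h4 : a = b := add_right_cancel h3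
    exact h4 ▸ ord.le_refl a

/-- The monomial exponent attached to a system of cells. -/
def pmono {k : ℕ} (cell : Fin k → ℕ × ℕ) : (ℕ×ℕ) →₀ ℕ := ∑ a, Finsupp.single (cell a) 1

lemma prod_X_eq {k : ℕ} (cell : Fin k → ℕ × ℕ) :
    (∏ a, (MvPolynomial.X (cell a) : Rring)) = MvPolynomial.monomial (pmono cell) 1 := by
  unfold pmono
  suffices h : ∀ s : Finset (Fin k),
      (∏ a ∈ s, (X (cell a) : Rring)) = monomial (∑ a ∈ s, Finsupp.single (cell a) 1) 1 by
    exact h Finset.univ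
  intro s
  induction s using Finset.induction with
  | empty => simp
  | insert _ _ hni ih =>
    rw [Finset.prod_insert hni, Finset.sum_insert hni, ih, X, monomial_mul, one_mul]

lemma pmono_apply {k : ℕ} (cell : Fin k → ℕ×ℕ) (x : ℕ×ℕ) :
    pmono cell x = ∑ a : Fin k, (if cell a = x then 1 else 0) := by
  unfold pmono
  rw [Finsupp.finset_sum_apply]
  exact Finset.sum_congr rfl (fun a _ => Finsupp.single_apply)

lemma pmono_exists {k : ℕ} {cell : Fin k → ℕ×ℕ} {x : ℕ×ℕ} (h : pmono cell x ≠ 0) :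
    ∃ a, cell a = x := by
  by_contra hc
  push_neg at hc
  apply h
  rw [pmono_apply]
  exact Finset.sum_eq_zero (fun a _ => if_neg (hc a))

lemma pmono_cell_pos {k : ℕ} (cell : Fin k → ℕ×ℕ) (a : Fin k) : pmono cell (cell a) ≠ 0 := by
  rw [pmono_apply]
  intro h
  rw [Finset.sum_eq_zero_iff] at h
  have := h a (Finset.mem_univ a)
  rw [if_pos rfl] at this
  exact one_ne_zero this

/-- cells of a permutation term in a minor -/
def dcell {k : ℕ} (rs cs : Fin k → ℕ) (σ : Equiv.Perm (Fin k)) : Fin k → ℕ×ℕ :=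
  fun a => (rs (σ a), cs a)

lemma pmono_inj {k : ℕ} {rs cs : Fin k → ℕ} (hrs : Function.Injective rs)
    (hcs : Function.Injective cs) {σ τ : Equiv.Perm (Fin k)}
    (h : pmono (dcell rs cs σ) = pmono (dcell rs cs τ)) : σ = τ := by
  apply Equiv.ext
  intro a
  have h1 : pmono (dcell rs cs τ) (dcell rs cs τ a) ≠ 0 := pmono_cell_pos _ a
  rw [← h] at h1
  obtain ⟨b, hb⟩ := pmono_exists h1
  have hcs' : cs b = cs a := congrArg Prod.snd hb
  have hba : b = a := hcs hcs'
  subst hba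
  have : rs (σ b) = rs (τ b) := congrArg Prod.fst hb
  exact hrs this

section Det
variable {S : Set (ℕ×ℕ)} {k : ℕ} {rs cs : Fin k → ℕ}

lemma det_term_eq (σ : Equiv.Perm (Fin k)) (hσ : ∀ a, (rs (σ a), cs a) ∉ S) :
    (∏ a, (Matrix.of fun a b : Fin k => zmatAvoid S (rs a) (cs b)) (σ a) a)
      = monomial (pmono (dcell rs cs σ)) 1 := by
  rw [← prod_X_eq]
  refine Finset.prod_congr rfl (fun a _ => ?_)
  simp only [Matrix.of_apply, zmatAvoid, if_neg (hσ a)]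
  rfl

lemma det_term_zero (σ : Equiv.Perm (Fin k)) (hσ : ∃ a, (rs (σ a), cs a) ∈ S) :
    (∏ a, (Matrix.of fun a b : Fin k => zmatAvoid S (rs a) (cs b)) (σ a) a) = 0 := by
  obtain ⟨a, ha⟩ := hσ
  refine Finset.prod_eq_zero (Finset.mem_univ a) ?_
  simp only [Matrix.of_apply, zmatAvoid, if_pos ha]

lemma det_support {m : (ℕ×ℕ) →₀ ℕ}
    (hm : m ∈ (Matrix.det (Matrix.of fun a b : Fin k => zmatAvoid S (rs a) (cs b))).support) :
    ∃ σ : Equiv.Perm (Fin k), (∀ a, (rs (σ a), cs a) ∉ S) ∧ m = pmono (dcell rs cs σ) := by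
  rw [Matrix.det_apply] at hm
  obtain ⟨σ, hσmem, hσ⟩ := Finset.mem_biUnion.mp (support_sum hm)
  rw [Units.smul_def] at hσ
  have hσ2 := support_smul hσ
  by_cases hgood : ∀ a, (rs (σ a), cs a) ∉ S
  · refine ⟨σ, hgood, ?_⟩
    rw [det_term_eq σ hgood, support_monomial, if_neg one_ne_zero] at hσ2
    exact Finset.mem_singleton.mp hσ2
  · exfalso
    push_neg at hgood
    rw [det_term_zero σ hgood] at hσ2
    simp at hσ2

lemma det_coeff (hrs : Function.Injective rs) (hcs : Function.Injective cs)
    (τ : Equiv.Perm (Fin k)) (hτ : ∀ a, (rs (τ a), cs a) ∉ S) :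
    coeff (pmono (dcell rs cs τ))
      (Matrix.det (Matrix.of fun a b : Fin k => zmatAvoid S (rs a) (cs b)))
      = ((Equiv.Perm.sign τ : ℤ) : ℂ) := by
  rw [Matrix.det_apply, coeff_sum]
  rw [Finset.sum_eq_single τ]
  · rw [Units.smul_def, coeff_smul, det_term_eq τ hτ, coeff_monomial, if_pos rfl,
      zsmul_eq_mul, mul_one]
  · intro σ _ hστ
    rw [Units.smul_def, coeff_smul]
    by_cases hgood : ∀ a, (rs (σ a), cs a) ∉ S
    · rw [det_term_eq σ hgood, coeff_monomial, if_neg, smul_zero]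
      exact fun hcontra => hστ (pmono_inj hrs hcs hcontra)
    · push_neg at hgood
      rw [det_term_zero σ hgood, coeff_zero, smul_zero]
  · intro h
    exact absurd (Finset.mem_univ τ) h

lemma sign_cast_ne_zero {k : ℕ} (τ : Equiv.Perm (Fin k)) :
    ((Equiv.Perm.sign τ : ℤ) : ℂ) ≠ 0 := by
  rcases Int.units_eq_one_or (Equiv.Perm.sign τ) with h | h <;> rw [h] <;> norm_num

end Det


end

section

lemma diagram_mem {x : PartialPerm} {p : ℕ × ℕ} :
    p ∈ x.diagram ↔ 1 ≤ p.1 ∧ p.1 ≤ x.rows ∧ 1 ≤ p.2 ∧ p.2 ≤ x.cols ∧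
      (∀ j', j' ≤ p.2 → ¬ x.mat p.1 j') ∧ (∀ i', i' ≤ p.1 → ¬ x.mat i' p.2) := Iff.rfl

lemma rank_zero_cell {x : PartialPerm} {i j a b : ℕ} (h : x.rank i j = 0)
    (ha : a ≤ i) (hb : b ≤ j) : ¬ x.mat a b := by
  intro hm
  rw [rank_eq, Set.ncard_eq_zero (rset_finite x i j)] at h
  have : (a, b) ∈ rset x i j := ⟨ha, hb, hm⟩
  rw [h] at this
  exact this

/-- Characterization of the dominant part by rank. -/
lemma domPart_iff {x : PartialPerm} {p : ℕ × ℕ} :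
    p ∈ x.domPart ↔ (1 ≤ p.1 ∧ p.1 ≤ x.rows ∧ 1 ≤ p.2 ∧ p.2 ≤ x.cols ∧
      x.rank p.1 p.2 = 0) := by
  constructor
  · rintro ⟨hd, hr⟩
    obtain ⟨h1, h2, h3, h4, _, _⟩ := diagram_mem.mp hd
    exact ⟨h1, h2, h3, h4, hr⟩
  · rintro ⟨h1, h2, h3, h4, hr⟩
    refine ⟨diagram_mem.mpr ⟨h1, h2, h3, h4, ?_, ?_⟩, hr⟩
    · exact fun j' hj' => rank_zero_cell hr le_rfl hj'
    · exact fun i' hi' => rank_zero_cell hr hi' le_rfl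

/-- Essential-box lifting: any diagram cell has an essential cell to its southeast
with the same rank. -/
lemma ess_lift {x : PartialPerm} {p : ℕ × ℕ} (hp : p ∈ x.diagram) :
    ∃ q ∈ x.ess, p.1 ≤ q.1 ∧ p.2 ≤ q.2 ∧ x.rank q.1 q.2 = x.rank p.1 p.2 := by
  obtain ⟨k, hk⟩ : ∃ k, (x.rows - p.1) + (x.cols - p.2) ≤ k :=
    ⟨(x.rows - p.1) + (x.cols - p.2), le_rfl⟩
  induction k generalizing p with
  | zero =>
    refine ⟨p, ⟨hp, ?_, ?_⟩, le_rfl, le_rfl, rfl⟩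
    · intro hmem
      have := (diagram_mem.mp hmem).2.1
      have h2 := (diagram_mem.mp hp).2.1
      omega
    · intro hmem
      have := (diagram_mem.mp hmem).2.2.2.1
      have h2 := (diagram_mem.mp hp).2.2.2.1
      omega
  | succ k ih =>
    by_cases hS : ((p.1 + 1, p.2) : ℕ × ℕ) ∈ x.diagram
    · have hrk : x.rank (p.1+1) p.2 = x.rank p.1 p.2 := by
        have hnr := (diagram_mem.mp hS).2.2.2.2.1
        have := rank_succ_row_nodot x (i := p.1+1) (j := p.2) (fun b hb => hnr b hb)
        simpa using this
      have hmeas : (x.rows - (p.1+1)) + (x.cols - p.2) ≤ k := by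
        have := (diagram_mem.mp hS).2.1
        omega
      obtain ⟨q, hq, hq1, hq2, hq3⟩ := ih hS hmeas
      exact ⟨q, hq, by omega, hq2, by rw [hq3, hrk]⟩
    · by_cases hE : ((p.1, p.2 + 1) : ℕ × ℕ) ∈ x.diagram
      · have hrk : x.rank p.1 (p.2+1) = x.rank p.1 p.2 := by
          have hnr := (diagram_mem.mp hE).2.2.2.2.2
          have := rank_succ_col_nodot x (i := p.1) (j := p.2+1) (fun a ha => hnr a ha)
          simpa using this
        have hmeas : (x.rows - p.1) + (x.cols - (p.2+1)) ≤ k := by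
          have := (diagram_mem.mp hE).2.2.2.1
          omega
        obtain ⟨q, hq, hq1, hq2, hq3⟩ := ih hE hmeas
        exact ⟨q, hq, hq1, by omega, by rw [hq3, hrk]⟩
      · exact ⟨p, ⟨hp, hS, hE⟩, le_rfl, le_rfl, rfl⟩

namespace Ctx
variable {n : ℕ} {v : PartialPerm} {i0 r' c s' : ℕ}

/-- Cells of `D_v` outside the lost row/column pieces stay in `D_u`. -/
lemma diagram_stable (H : Ctx n v i0 r' c s') {p : ℕ × ℕ} (hp : p ∈ v.diagram)
    (h1 : ¬(p.1 = r' ∧ c ≤ p.2)) (h2 : ¬(p.2 = s' ∧ i0 ≤ p.1)) :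
    p ∈ H.u.diagram := by
  have hh1 := H.hi01; have hh2 := H.hir; have hh3 := H.hcs
  obtain ⟨g1, g2, g3, g4, grow, gcol⟩ := diagram_mem.mp hp
  have hrows : H.u.rows = v.rows := rfl
  have hcols : H.u.cols = v.cols := rfl
  refine diagram_mem.mpr ⟨g1, hrows ▸ g2, g3, hcols ▸ g4, ?_, ?_⟩
  · intro j' hj' hmat
    by_cases hi : p.1 = i0
    · have : j' = s' := (H.u_mat_i0 (j := j')).mp (hi ▸ hmat)
      subst this
      have hc2 : c ≤ p.2 := le_trans (le_of_lt H.hcs) hj'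
      exact grow c hc2 (hi ▸ H.hc)
    · by_cases hr : p.1 = r'
      · have : j' = c := (H.u_mat_r' (j := j')).mp (hr ▸ hmat)
        subst this
        exact h1 ⟨hr, hj'⟩
      · exact grow j' hj' ((H.u_mat_other hi hr).mp hmat)
  · intro i' hi' hmat
    by_cases hi : i' = i0
    · have : p.2 = s' := (H.u_mat_i0).mp (hi ▸ hmat)
      exact h2 ⟨this, hi ▸ hi'⟩
    · by_cases hr : i' = r'
      · have : p.2 = c := (H.u_mat_r').mp (hr ▸ hmat)
        have := gcol i0 (by omega) (this ▸ H.hc)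
        exact this
      · exact gcol i' hi' ((H.u_mat_other hi hr).mp hmat)

/-- The upward walk for a lost cell in row `r'`. -/
lemma walk_row (H : Ctx n v i0 r' c s') {p2 : ℕ} (hp21 : 1 ≤ p2) (hp2n : p2 ≤ n)
    (hcp2 : c ≤ p2) (hp2s : p2 < s')
    (hcol : ∀ a, a ≤ r' → ¬ v.mat a p2)
    (φ : ℕ → ℕ) (hφ : ∀ i, φ i ≤ φ (i-1) + 1)
    (hstart : H.u.rank r' p2 + 1 ≤ φ r') :
    ∃ i, i0 ≤ i ∧ i < r' ∧ (i, p2) ∈ H.u.diagram ∧ H.u.rank i p2 + 1 ≤ φ i := by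
  have h1 := H.hi01; have h2 := H.hir; have hrn := H.hrn
  have ucol : ∀ a, a < r' → ¬ H.u.mat a p2 := by
    intro a ha hmat
    by_cases hi : a = i0
    · have : p2 = s' := (H.u_mat_i0).mp (hi ▸ hmat)
      omega
    · exact hcol a (le_of_lt ha) ((H.u_mat_other hi (by omega)).mp hmat)
  -- base step: from r' to r'-1
  have hbase : H.u.rank (r'-1) p2 + 1 ≤ φ (r'-1) := by
    have hd : H.u.mat r' c := H.u_mat_r'.mpr rfl
    have := rank_succ_row_dot H.u (i := r') (by omega) hcp2 hd
    have hphi := hφ r'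
    omega
  -- downward induction
  suffices key : ∀ i, i < r' → i0 ≤ i → H.u.rank i p2 + 1 ≤ φ i →
      ∃ i', i0 ≤ i' ∧ i' < r' ∧ (i', p2) ∈ H.u.diagram ∧ H.u.rank i' p2 + 1 ≤ φ i' by
    exact key (r'-1) (by omega) (by omega) hbase
  intro i
  induction i using Nat.strong_induction_on with
  | _ i ih =>
    intro hir hi0i hrank
    by_cases hrow : ∃ b, b ≤ p2 ∧ H.u.mat i b
    · obtain ⟨b, hb, hmat⟩ := hrow
      have hii0 : i ≠ i0 := by
        intro hh
        have : b = s' := (H.u_mat_i0).mp (hh ▸ hmat)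
        omega
      have hstep : H.u.rank i p2 = H.u.rank (i-1) p2 + 1 :=
        rank_succ_row_dot H.u (by omega) hb hmat
      have hphi := hφ i
      exact ih (i-1) (by omega) (by omega) (by omega) (by omega)
    · push_neg at hrow
      refine ⟨i, hi0i, hir, diagram_mem.mpr ⟨by omega, ?_, hp21, ?_, ?_, ?_⟩, hrank⟩
      · have : H.u.rows = n := H.u_rows
        omega
      · have : H.u.cols = n := H.u_cols
        omega
      · exact fun j' hj' => hrow j' hj'
      · exact fun i' hi' => ucol i' (by omega)

/-- The leftward walk for a lost cell in column `s'`. -/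
lemma walk_col (H : Ctx n v i0 r' c s') {p1 : ℕ} (hp11 : 1 ≤ p1) (hp1n : p1 ≤ n)
    (hip1 : i0 ≤ p1) (hp1r : p1 < r')
    (hrow : ∀ b, b ≤ s' → ¬ v.mat p1 b)
    (φ : ℕ → ℕ) (hφ : ∀ j, φ j ≤ φ (j-1) + 1)
    (hstart : H.u.rank p1 s' + 1 ≤ φ s') :
    ∃ j, c ≤ j ∧ j < s' ∧ (p1, j) ∈ H.u.diagram ∧ H.u.rank p1 j + 1 ≤ φ j := by
  have h1 := H.hi01; have h2 := H.hir; have h3 := H.hcs; have h4 := H.hc1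
  have hrn := H.hrn; have hsn := H.hsn
  have urow : ∀ b, b < s' → ¬ H.u.mat p1 b := by
    intro b hb hmat
    by_cases hi : p1 = i0
    · have : b = s' := (H.u_mat_i0).mp (hi ▸ hmat)
      omega
    · exact hrow b (le_of_lt hb) ((H.u_mat_other hi (by omega)).mp hmat)
  have hbase : H.u.rank p1 (s'-1) + 1 ≤ φ (s'-1) := by
    have hd : H.u.mat i0 s' := H.u_mat_i0.mpr rfl
    have := rank_succ_col_dot H.u (j := s') (by omega) hip1 hd
    have hphi := hφ s'
    omega
  suffices key : ∀ j, j < s' → c ≤ j → H.u.rank p1 j + 1 ≤ φ j →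
      ∃ j', c ≤ j' ∧ j' < s' ∧ (p1, j') ∈ H.u.diagram ∧ H.u.rank p1 j' + 1 ≤ φ j' by
    exact key (s'-1) (by omega) (by omega) hbase
  intro j
  induction j using Nat.strong_induction_on with
  | _ j ih =>
    intro hjs hcj hrank
    by_cases hcolm : ∃ a, a ≤ p1 ∧ H.u.mat a j
    · obtain ⟨a, ha, hmat⟩ := hcolm
      have hjc : j ≠ c := by
        intro hh
        subst hh
        -- u's column j=c dot is at row r' > p1
        have hsw : v.mat (swapNat i0 r' a) j := (H.u_mat.mp hmat).2.2
        have : swapNat i0 r' a = i0 := v.mat_col _ _ _ hsw H.hc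
        have : a = r' := by
          simp only [swapNat] at this
          split_ifs at this <;> omega
        omega
      have hstep : H.u.rank p1 j = H.u.rank p1 (j-1) + 1 :=
        rank_succ_col_dot H.u (by omega) ha hmat
      have hphi := hφ j
      exact ih (j-1) (by omega) (by omega) (by omega) (by omega)
    · push_neg at hcolm
      refine ⟨j, hcj, hjs, diagram_mem.mpr ⟨hp11, ?_, by omega, ?_, ?_, ?_⟩, hrank⟩
      · have : H.u.rows = n := H.u_rows
        omega
      · have : H.u.cols = n := H.u_cols
        omega
      · exact fun j' hj' => urow j' (by omega)
      · exact fun i' hi' => hcolm i' hi'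

end Ctx


end

section

set_option maxHeartbeats 1000000 in
lemma exchange (ord : MonomialOrd (ℕ × ℕ)) {S T : Set (ℕ×ℕ)} (hST : S ⊆ T) {k : ℕ}
    {rs cs : Fin k → ℕ}
    (hrs : StrictMono rs) (hcs : StrictMono cs) {σ : Equiv.Perm (Fin k)}
    (hσ : ∀ a, (rs (σ a), cs a) ∉ S)
    (hmax : ∀ m ∈ (Matrix.det (Matrix.of fun a b : Fin k => zmatAvoid S (rs a) (cs b))).support,
      ord.le m (pmono (dcell rs cs σ)))
    (A : Finset (Fin k)) (hA : ∀ a ∈ A, (rs (σ a), cs a) ∉ T) :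
    ∃ (rs' cs' : Fin A.card → ℕ) (τ0 : Equiv.Perm (Fin A.card)),
      StrictMono rs' ∧ StrictMono cs' ∧
      (∀ b, ∃ a ∈ A, rs' b = rs (σ a)) ∧ (∀ b, ∃ a ∈ A, cs' b = cs a) ∧
      pmono (dcell rs' cs' τ0) = ∑ a ∈ A, Finsupp.single (rs (σ a), cs a) 1 ∧
      IsInitTerm ord
        (Matrix.det (Matrix.of fun a b : Fin A.card => zmatAvoid T (rs' a) (cs' b)))
        (monomial (pmono (dcell rs' cs' τ0)) ((Equiv.Perm.sign τ0 : ℤ) : ℂ)) := by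
  have hrsi : Function.Injective (fun a => rs (σ a)) := hrs.injective.comp σ.injective
  have hcsi : Function.Injective cs := hcs.injective
  set m' := A.card with hm'
  -- row and column value sets
  set RA : Finset ℕ := A.image (fun a => rs (σ a)) with hRAdef
  set CA : Finset ℕ := A.image cs with hCAdef
  have hRA : RA.card = m' := Finset.card_image_of_injective A hrsi
  have hCA : CA.card = m' := Finset.card_image_of_injective A hcsi
  set rs' : Fin m' → ℕ := ⇑(RA.orderEmbOfFin hRA) with hrs'def
  set cs' : Fin m' → ℕ := ⇑(CA.orderEmbOfFin hCA) with hcs'def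
  have hrs'mono : StrictMono rs' := (RA.orderEmbOfFin hRA).strictMono
  have hcs'mono : StrictMono cs' := (CA.orderEmbOfFin hCA).strictMono
  -- ψ : column indices to A
  have hψex : ∀ b : Fin m', ∃ a, a ∈ A ∧ cs a = cs' b := by
    intro b
    have : cs' b ∈ CA := Finset.orderEmbOfFin_mem CA hCA b
    rw [hCAdef, Finset.mem_image] at this
    obtain ⟨a, ha, haeq⟩ := this
    exact ⟨a, ha, haeq⟩
  choose ψ hψA hψcs using hψex
  have hψinj : Function.Injective ψ := by
    intro b b' h
    apply hcs'mono.injective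
    rw [← hψcs b, ← hψcs b', h]
  -- ρ : row indices to A
  have hρex : ∀ b : Fin m', ∃ a, a ∈ A ∧ rs (σ a) = rs' b := by
    intro b
    have : rs' b ∈ RA := Finset.orderEmbOfFin_mem RA hRA b
    rw [hRAdef, Finset.mem_image] at this
    obtain ⟨a, ha, haeq⟩ := this
    exact ⟨a, ha, haeq⟩
  choose ρ hρA hρrs using hρex
  have hρinj : Function.Injective ρ := by
    intro b b' h
    apply hrs'mono.injective
    rw [← hρrs b, ← hρrs b', h]
  -- surjectivity of ψ onto A
  have hψsurj : ∀ a ∈ A, ∃ b, ψ b = a := by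
    intro a ha
    have hmem : cs a ∈ CA := Finset.mem_image_of_mem cs ha
    have : cs a ∈ Set.range cs' := by
      rw [hcs'def, Finset.range_orderEmbOfFin]
      exact_mod_cast hmem
    obtain ⟨b, hb⟩ := this
    exact ⟨b, hcsi (by rw [hψcs b, hb])⟩
  -- τ0 : the permutation matching rows to columns within A
  have hτex : ∀ b : Fin m', ∃ b', rs' b' = rs (σ (ψ b)) := by
    intro b
    have hmem : rs (σ (ψ b)) ∈ RA := Finset.mem_image_of_mem _ (hψA b)
    have : rs (σ (ψ b)) ∈ Set.range rs' := by
      rw [hrs'def, Finset.range_orderEmbOfFin]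
      exact_mod_cast hmem
    obtain ⟨b', hb'⟩ := this
    exact ⟨b', hb'⟩
  choose τf hτf using hτex
  have hτinj : Function.Injective τf := by
    intro b b' h
    apply hψinj
    apply σ.injective
    apply hrs.injective
    rw [← hτf b, ← hτf b', h]
  let τ0 : Equiv.Perm (Fin m') := Equiv.ofBijective τf ((Finite.injective_iff_bijective).mp hτinj)
  have hτ0app : ∀ b, τ0 b = τf b := fun b => rfl
  -- cells of τ0 in the subminor are the A-cells
  have hcellτ0 : ∀ b, dcell rs' cs' τ0 b = (rs (σ (ψ b)), cs (ψ b)) := by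
    intro b
    simp only [dcell, hτ0app, hτf, hψcs]
  have hτ0T : ∀ b, (rs' (τ0 b), cs' b) ∉ T := by
    intro b
    have := hcellτ0 b
    simp only [dcell] at this
    rw [this]
    exact hA (ψ b) (hψA b)
  -- pmono identity
  have hpm : pmono (dcell rs' cs' τ0) = ∑ a ∈ A, Finsupp.single (rs (σ a), cs a) 1 := by
    unfold pmono
    refine Finset.sum_bij (fun b _ => ψ b) (fun b _ => hψA b) ?_ ?_ ?_
    · intro b _ b' _ h
      exact hψinj h
    · intro a ha
      obtain ⟨b, hb⟩ := hψsurj a ha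
      exact ⟨b, Finset.mem_univ b, hb⟩
    · intro b _
      rw [hcellτ0 b]
  -- the subminor and its coefficient
  have hcoeff : coeff (pmono (dcell rs' cs' τ0))
      (Matrix.det (Matrix.of fun a b : Fin m' => zmatAvoid T (rs' a) (cs' b)))
      = ((Equiv.Perm.sign τ0 : ℤ) : ℂ) :=
    det_coeff hrs'mono.injective hcs'mono.injective τ0 hτ0T
  refine ⟨rs', cs', τ0, hrs'mono, hcs'mono,
    fun b => ⟨ρ b, hρA b, (hρrs b).symm⟩, fun b => ⟨ψ b, hψA b, (hψcs b).symm⟩, hpm, ?_⟩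
  refine ⟨pmono (dcell rs' cs' τ0), ?_, ?_, by rw [hcoeff]⟩
  · rw [mem_support_iff, hcoeff]
    exact sign_cast_ne_zero τ0
  -- maximality
  intro mx hmx
  obtain ⟨τ, hτT, hmxeq⟩ := det_support hmx
  -- β : A → Fin m' inverse of ψ
  have hβex : ∀ a, a ∈ A → ∃ b, ψ b = a := hψsurj
  -- combined permutation π on Fin k
  let π : Fin k → Fin k := fun a =>
    if h : a ∈ A then ρ (τ (Classical.choose (hβex a h))) else a
  have hπA : ∀ a (h : a ∈ A), π a = ρ (τ (Classical.choose (hβex a h))) := by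
    intro a h
    simp only [π, dif_pos h]
  have hπnA : ∀ a, a ∉ A → π a = a := by
    intro a h
    simp only [π, dif_neg h]
  have hβspec : ∀ a (h : a ∈ A), ψ (Classical.choose (hβex a h)) = a :=
    fun a h => Classical.choose_spec (hβex a h)
  have hβinj : ∀ a (ha : a ∈ A) a' (ha' : a' ∈ A),
      Classical.choose (hβex a ha) = Classical.choose (hβex a' ha') → a = a' := by
    intro a ha a' ha' h
    rw [← hβspec a ha, ← hβspec a' ha', h]
  have hπinj : Function.Injective π := by
    intro a a' h
    by_cases ha : a ∈ A <;> by_cases ha' : a' ∈ A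
    · rw [hπA a ha, hπA a' ha'] at h
      exact hβinj a ha a' ha' (τ.injective (hρinj h))
    · exfalso
      rw [hπA a ha, hπnA a' ha'] at h
      exact ha' (h ▸ hρA _)
    · exfalso
      rw [hπnA a ha, hπA a' ha'] at h
      exact ha (h.symm ▸ hρA _)
    · rwa [hπnA a ha, hπnA a' ha'] at h
  let πe : Equiv.Perm (Fin k) := Equiv.ofBijective π ((Finite.injective_iff_bijective).mp hπinj)
  let σt : Equiv.Perm (Fin k) := πe.trans σ
  have hσtapp : ∀ a, σt a = σ (π a) := fun a => rfl
  -- cells of σt avoid S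
  have hσtS : ∀ a, (rs (σt a), cs a) ∉ S := by
    intro a
    rw [hσtapp]
    by_cases ha : a ∈ A
    · have hcseq : cs' (Classical.choose (hβex a ha)) = cs a :=
        (hψcs _).symm.trans (congrArg cs (hβspec a ha))
      rw [hπA a ha, hρrs, ← hcseq]
      exact fun hmem => (hτT _) (hST hmem)
    · rw [hπnA a ha]
      exact hσ a
  -- σt's monomial is in the support of the big minor
  have hσtsupp : pmono (dcell rs cs σt)
      ∈ (Matrix.det (Matrix.of fun a b : Fin k => zmatAvoid S (rs a) (cs b))).support := by
    rw [mem_support_iff, det_coeff hrs.injective hcs.injective σt hσtS]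
    exact sign_cast_ne_zero σt
  have hle := hmax _ hσtsupp
  -- decompose both sides
  have hrest : ∀ a ∈ Aᶜ, Finsupp.single (rs (σt a), cs a) (1:ℕ)
      = Finsupp.single (rs (σ a), cs a) 1 := by
    intro a ha
    rw [hσtapp, hπnA a (Finset.mem_compl.mp ha)]
  have hsplit1 : pmono (dcell rs cs σt)
      = (∑ a ∈ A, Finsupp.single (rs (σt a), cs a) 1)
        + ∑ a ∈ Aᶜ, Finsupp.single (rs (σ a), cs a) 1 := by
    unfold pmono dcell
    rw [← Finset.sum_add_sum_compl A]
    congr 1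
    exact Finset.sum_congr rfl hrest
  have hsplit2 : pmono (dcell rs cs σ)
      = (∑ a ∈ A, Finsupp.single (rs (σ a), cs a) 1)
        + ∑ a ∈ Aᶜ, Finsupp.single (rs (σ a), cs a) 1 := by
    unfold pmono dcell
    rw [← Finset.sum_add_sum_compl A]
  -- the A-part of σt's monomial is mx
  have hApart : (∑ a ∈ A, Finsupp.single (rs (σt a), cs a) (1:ℕ))
      = pmono (dcell rs' cs' τ) := by
    unfold pmono
    refine (Finset.sum_bij (fun b _ => ψ b) (fun b _ => hψA b) ?_ ?_ ?_).symm
    · intro b _ b' _ h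
      exact hψinj h
    · intro a ha
      obtain ⟨b, hb⟩ := hψsurj a ha
      exact ⟨b, Finset.mem_univ b, hb⟩
    · intro b _
      have hψbA := hψA b
      have hβb : Classical.choose (hβex (ψ b) hψbA) = b := by
        apply hψinj
        exact hβspec (ψ b) hψbA
      rw [hσtapp, hπA (ψ b) hψbA, hβb, hρrs, hψcs]
      rfl
  rw [hmxeq]
  apply ord_le_cancel ord (c' := ∑ a ∈ Aᶜ, Finsupp.single (rs (σ a), cs a) 1)
  have e1 : pmono (dcell rs cs σt)
      = pmono (dcell rs' cs' τ) + ∑ a ∈ Aᶜ, Finsupp.single (rs (σ a), cs a) 1 := by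
    rw [hsplit1, hApart]
  have e2 : pmono (dcell rs cs σ)
      = pmono (dcell rs' cs' τ0) + ∑ a ∈ Aᶜ, Finsupp.single (rs (σ a), cs a) 1 := by
    rw [hsplit2, ← hpm]
  rw [e1, e2] at hle
  exact hle


end

section

lemma init_X_self (ord : MonomialOrd (ℕ × ℕ)) (x : ℕ × ℕ) :
    IsInitTerm ord (MvPolynomial.X x : Rring) (MvPolynomial.X x) := by
  refine ⟨Finsupp.single x 1, ?_, ?_, ?_⟩
  · rw [support_X]
    exact Finset.mem_singleton_self _
  · intro m' hm'
    rw [support_X, Finset.mem_singleton] at hm'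
    subst hm'
    exact ord.le_refl _
  · rw [X, coeff_monomial, if_pos rfl]

lemma filter_step {k : ℕ} {f : Fin k → ℕ} (hf : Function.Injective f) (i : ℕ) :
    (Finset.univ.filter (fun a => f a ≤ i)).card
      ≤ (Finset.univ.filter (fun a => f a ≤ i-1)).card + 1 := by
  have hsub : (Finset.univ.filter (fun a => f a ≤ i))
      ⊆ (Finset.univ.filter (fun a => f a ≤ i-1)) ∪ (Finset.univ.filter (fun a => f a = i)) := by
    intro a ha
    rw [Finset.mem_filter] at ha
    rw [Finset.mem_union, Finset.mem_filter, Finset.mem_filter]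
    rcases Nat.lt_or_ge (f a) i with h | h
    · exact Or.inl ⟨Finset.mem_univ a, by omega⟩
    · exact Or.inr ⟨Finset.mem_univ a, by omega⟩
  calc (Finset.univ.filter (fun a => f a ≤ i)).card
      ≤ _ := Finset.card_le_card hsub
    _ ≤ _ + (Finset.univ.filter (fun a => f a = i)).card := Finset.card_union_le _ _
    _ ≤ _ + 1 := by
        gcongr
        refine Finset.card_le_one.mpr (fun a ha b hb => ?_)
        rw [Finset.mem_filter] at ha hb
        exact hf (ha.2.trans hb.2.symm)

namespace Ctx
variable {n : ℕ} {v : PartialPerm} {i0 r' c s' : ℕ}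

lemma dom_mono (H : Ctx n v i0 r' c s') : v.domPart ⊆ H.u.domPart := by
  intro p hp
  obtain ⟨h1, h2, h3, h4, h5⟩ := domPart_iff.mp hp
  have hle := H.rank_u_le p.1 p.2
  exact domPart_iff.mpr ⟨h1, h2, h3, h4, by omega⟩

set_option maxHeartbeats 2000000 in
/-- MAIN LEMMA: J_v ⊆ J_u for u = v t_{i0 r'} with v(i0) = c < s' = v(r'). -/
theorem Jideal_mono (H : Ctx n v i0 r' c s') (ord : MonomialOrd (ℕ × ℕ)) :
    Jideal ord v ≤ Jideal ord H.u := by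
  rw [Jideal, initSpan]
  apply Ideal.span_le.mpr
  rintro t ⟨g, hg, hinit⟩
  rcases hg with ⟨p, hp, rfl⟩ | ⟨p, hp, hgmin⟩
  · -- dominant variable generator
    exact Ideal.subset_span ⟨zvar p.1 p.2, Or.inl ⟨p, H.dom_mono hp, rfl⟩, hinit⟩
  · -- minor generator at an essential box p of v
    obtain ⟨rs, cs, hrsm, hcsm, hrb, hcb, hgdet⟩ := hgmin
    subst hgdet
    obtain ⟨mm, hmm_mem, hmm_max, hteq⟩ := hinit
    obtain ⟨σ, hσ, hmmeq⟩ := det_support hmm_mem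
    subst hmmeq
    by_cases hdom : ∃ a, (rs (σ a), cs a) ∈ H.u.domPart
    · -- some cell of the initial term is a dominant variable of u
      obtain ⟨a0, ha0⟩ := hdom
      set cell : ℕ × ℕ := (rs (σ a0), cs a0) with hcelldef
      have hsplit : pmono (dcell rs cs σ)
          = Finsupp.single cell 1 + ∑ b ∈ Finset.univ.erase a0, Finsupp.single (dcell rs cs σ b) 1 := by
        unfold pmono
        exact (Finset.add_sum_erase _ _ (Finset.mem_univ a0)).symm
      have hXcell : (MvPolynomial.X cell : Rring) = monomial (Finsupp.single cell 1) 1 := by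
        rw [X]
      have hfac : t = monomial (∑ b ∈ Finset.univ.erase a0, Finsupp.single (dcell rs cs σ b) 1)
          (coeff (pmono (dcell rs cs σ))
            (Matrix.det (Matrix.of fun a b => zmatAvoid v.domPart (rs a) (cs b))))
          * MvPolynomial.X cell := by
        rw [hteq, hXcell, monomial_mul, mul_one, hsplit,
          add_comm (Finsupp.single cell (1:ℕ))]
      rw [hfac]
      apply Ideal.mul_mem_left
      apply Ideal.subset_span
      refine ⟨zvar cell.1 cell.2, Or.inl ⟨cell, ha0, rfl⟩, ?_⟩
      have : zvar cell.1 cell.2 = MvPolynomial.X cell := rfl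
      rw [this]
      exact init_X_self ord cell
    · -- all cells avoid Dom u : find a suitable essential box of u
      push_neg at hdom
      have hpe : p ∈ v.ess := hp.1
      have hpd : p ∈ v.diagram := hpe.1
      obtain ⟨hb1, hb2, hb3, hb4, hrowc, hcolc⟩ := diagram_mem.mp hpd
      have hvrows : v.rows = n := H.hv.1
      have hvcols : v.cols = n := H.hv.2.1
      have hrbσ : ∀ a, 1 ≤ rs (σ a) ∧ rs (σ a) ≤ p.1 := fun a => hrb (σ a)
      have hk1 : (Finset.univ : Finset (Fin (v.rank p.1 p.2 + 1))).card = v.rank p.1 p.2 + 1 := by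
        rw [Finset.card_univ, Fintype.card_fin]
      -- Step 1: find a diagram box q0 of u with enough cells of the initial term NW of it
      have hbox : ∃ q0 : ℕ × ℕ, q0 ∈ H.u.diagram ∧
          H.u.rank q0.1 q0.2 + 1
            ≤ (Finset.univ.filter (fun a => rs (σ a) ≤ q0.1 ∧ cs a ≤ q0.2)).card := by
        by_cases hLr : p.1 = r' ∧ c ≤ p.2
        · -- walk up
          have hp2s : p.2 < s' := by
            by_contra hcon
            exact hrowc s' (by omega) (hLr.1 ▸ H.hs)
          have hst : H.u.rank r' p.2 + 1
              ≤ (Finset.univ.filter (fun a => rs (σ a) ≤ r')).card := by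
            have hall : (Finset.univ.filter (fun a => rs (σ a) ≤ r')) = Finset.univ := by
              refine Finset.filter_true_of_mem (fun a _ => ?_)
              have := (hrbσ a).2
              omega
            rw [hall, hk1]
            have hle2 : H.u.rank r' p.2 ≤ v.rank p.1 p.2 := by
              rw [hLr.1]
              exact H.rank_u_le r' p.2
            omega
          obtain ⟨i, hi1, hi2, hidiag, hicount⟩ := H.walk_row (p2 := p.2) hb3 (by omega)
            hLr.2 hp2s (fun a ha => hcolc a (by omega))
            (φ := fun i => (Finset.univ.filter (fun a => rs (σ a) ≤ i)).card)
            (fun i => filter_step (hrsm.injective.comp σ.injective) i) hst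
          refine ⟨(i, p.2), hidiag, ?_⟩
          have heqf : (Finset.univ.filter (fun a => rs (σ a) ≤ i ∧ cs a ≤ p.2))
              = (Finset.univ.filter (fun a => rs (σ a) ≤ i)) := by
            exact Finset.filter_congr (fun a _ => and_iff_left (hcb a).2)
          rw [heqf]
          exact hicount
        · by_cases hLc : p.2 = s' ∧ i0 ≤ p.1
          · -- walk left
            have hp1r : p.1 < r' := by
              by_contra hcon
              exact hcolc r' (by omega) (hLc.1 ▸ H.hs)
            have hst2 : H.u.rank p.1 s' + 1
                ≤ (Finset.univ.filter (fun a => cs a ≤ s')).card := by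
              have hall : (Finset.univ.filter (fun a => cs a ≤ s')) = Finset.univ := by
                refine Finset.filter_true_of_mem (fun a _ => ?_)
                have := (hcb a).2
                omega
              rw [hall, hk1]
              have h2 : H.u.rank p.1 s' ≤ v.rank p.1 p.2 := by
                rw [hLc.1]
                exact H.rank_u_le p.1 s'
              omega
            obtain ⟨j, hj1, hj2, hjdiag, hjcount⟩ := H.walk_col (p1 := p.1) hb1 (by omega)
              hLc.2 hp1r (fun b hb => hrowc b (by omega))
              (φ := fun j => (Finset.univ.filter (fun a => cs a ≤ j)).card)
              (fun j => filter_step hcsm.injective j) hst2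
            refine ⟨(p.1, j), hjdiag, ?_⟩
            have heqf : (Finset.univ.filter (fun a => rs (σ a) ≤ p.1 ∧ cs a ≤ j))
                = (Finset.univ.filter (fun a => cs a ≤ j)) := by
              exact Finset.filter_congr (fun a _ => and_iff_right (hrbσ a).2)
            rw [heqf]
            exact hjcount
          · -- the box p itself survives
            refine ⟨p, H.diagram_stable hpd hLr hLc, ?_⟩
            have hall : (Finset.univ.filter (fun a => rs (σ a) ≤ p.1 ∧ cs a ≤ p.2))
                = Finset.univ := by
              refine Finset.filter_true_of_mem (fun a _ => ?_)
              exact ⟨(hrbσ a).2, (hcb a).2⟩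
            rw [hall, hk1]
            have := H.rank_u_le p.1 p.2
            omega
      obtain ⟨q0, hq0diag, hq0count⟩ := hbox
      -- Step 2: lift q0 to an essential box q of u with the same rank
      obtain ⟨q, hqess, hq01, hq02, hqrank⟩ := ess_lift hq0diag
      -- Step 3: choose exactly rank+1 cells NW of q0
      obtain ⟨A, hAsub, hAcard⟩ := Finset.exists_subset_card_eq
        (s := Finset.univ.filter (fun a => rs (σ a) ≤ q0.1 ∧ cs a ≤ q0.2))
        (n := H.u.rank q.1 q.2 + 1) (by rw [hqrank]; exact hq0count)
      have hAcell : ∀ a ∈ A, rs (σ a) ≤ q.1 ∧ cs a ≤ q.2 := by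
        intro a ha
        have := Finset.mem_filter.mp (hAsub ha)
        exact ⟨le_trans this.2.1 hq01, le_trans this.2.2 hq02⟩
      -- q is in essPrime u
      have hqbounds := diagram_mem.mp hqess.1
      have hqess' : q ∈ H.u.essPrime := by
        refine ⟨hqess, fun hqdom => ?_⟩
        have hq0 : H.u.rank q.1 q.2 = 0 := (domPart_iff.mp hqdom).2.2.2.2
        have hA1 : A.card = 1 := by omega
        obtain ⟨a, ha⟩ := Finset.card_pos.mp (by omega : 0 < A.card)
        refine hdom a (domPart_iff.mpr ⟨(hrbσ a).1, ?_, (hcb a).1, ?_, ?_⟩)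
        · exact le_trans (hAcell a ha).1 hqbounds.2.1
        · exact le_trans (hAcell a ha).2 hqbounds.2.2.2.1
        · show H.u.rank (rs (σ a)) (cs a) = 0
          have hmono := rank_mono H.u (hAcell a ha).1 (hAcell a ha).2
          omega
      -- Step 4: exchange
      obtain ⟨rs', cs', τ0, hrs'm, hcs'm, hrs'val, hcs'val, hpm, hinit''⟩ :=
        exchange ord H.dom_mono hrsm hcsm hσ
          (fun m hm => hmm_max m hm) A (fun a ha => hdom a)
      -- Step 5: assemble ideal membership
      set g'' := Matrix.det (Matrix.of fun a b : Fin A.card =>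
        zmatAvoid H.u.domPart (rs' a) (cs' b)) with hg''def
      have hmem0 : g'' ∈ minorsIn (zmatAvoid H.u.domPart) A.card q.1 q.2 := by
        refine ⟨rs', cs', hrs'm, hcs'm, ?_, ?_, rfl⟩
        · intro b
          obtain ⟨a, ha, haeq⟩ := hrs'val b
          exact ⟨haeq ▸ (hrbσ a).1, haeq ▸ (hAcell a ha).1⟩
        · intro b
          obtain ⟨a, ha, haeq⟩ := hcs'val b
          exact ⟨haeq ▸ (hcb a).1, haeq ▸ (hAcell a ha).2⟩
      have hseteq : minorsIn (zmatAvoid H.u.domPart) A.card q.1 q.2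
          = minorsIn (zmatAvoid H.u.domPart) (H.u.rank q.1 q.2 + 1) q.1 q.2 := by
        rw [hAcard]
      have hg''mem : g'' ∈ minorsIn (zmatAvoid H.u.domPart) (H.u.rank q.1 q.2 + 1) q.1 q.2 := by
        rw [← hseteq]
        exact hmem0
      -- divisibility
      have hmsplit : pmono (dcell rs cs σ)
          = pmono (dcell rs' cs' τ0) + ∑ a ∈ Aᶜ, Finsupp.single (rs (σ a), cs a) 1 := by
        rw [hpm]
        unfold pmono dcell
        rw [← Finset.sum_add_sum_compl A]
      have hεne : ((Equiv.Perm.sign τ0 : ℤ) : ℂ) ≠ 0 := sign_cast_ne_zero τ0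
      have hfac : t = monomial (∑ a ∈ Aᶜ, Finsupp.single (rs (σ a), cs a) 1)
          (coeff (pmono (dcell rs cs σ))
            (Matrix.det (Matrix.of fun a b => zmatAvoid v.domPart (rs a) (cs b)))
            * ((Equiv.Perm.sign τ0 : ℤ) : ℂ)⁻¹)
          * monomial (pmono (dcell rs' cs' τ0)) ((Equiv.Perm.sign τ0 : ℤ) : ℂ) := by
        have hexp : (∑ a ∈ Aᶜ, Finsupp.single (rs (σ a), cs a) 1) + pmono (dcell rs' cs' τ0)
            = pmono (dcell rs cs σ) := by
          rw [hmsplit, add_comm]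
        rw [hteq, monomial_mul, hexp]
        congr 1
        field_simp
      rw [hfac]
      apply Ideal.mul_mem_left
      apply Ideal.subset_span
      exact ⟨g'', Or.inr ⟨q, hqess', hg''mem⟩, hinit''⟩

end Ctx


end

end JvAux
end

open JvAux in
/-- `J_v ⊆ J_w` and `J_v ⊆ J_{u⁽ⁱ⁾}` for block predominant `w`. -/
theorem Jv_containments (n : ℕ) (w : PartialPerm)
    (hw : IsBlockPredominantPerm n w) (r s : ℕ) (hmax : IsMaxCorner w r s)
    (q : ℕ) (hq : w.mat q s)
    (ord : MonomialOrd (ℕ × ℕ)) (hord : IsDiagonalOrder ord) :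
    Jideal ord (mulT w r q) ≤ Jideal ord w ∧
      ∀ u ∈ PhiSet n (mulT w r q) r, Jideal ord (mulT w r q) ≤ Jideal ord u := by
  have hwperm : w.IsPerm n := hw.1
  have hwrows : w.rows = n := hwperm.1
  have hwcols : w.cols = n := hwperm.2.1
  obtain ⟨hdrs, -⟩ := hmax
  obtain ⟨hr1, hr2, hs1, hs2, hrowc, hcolc⟩ := diagram_mem.mp hdrs
  obtain ⟨hq1, hq2, -, -⟩ := w.mat_support q s hq
  have hrq : r < q := by
    by_contra hcon
    exact hcolc q (by omega) hq
  obtain ⟨s'', hs''⟩ := hwperm.2.2.1 r hr1 (hwrows ▸ hr2)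
  have hss'' : s < s'' := by
    by_contra hcon
    exact hrowc s'' (by omega) hs''
  -- the context for part 1
  have hvperm : (mulT w r q).IsPerm n :=
    mulT_isPerm hwperm r q hr1 (hwrows ▸ hr2) hq1 (hwrows ▸ hq2)
  have hvrs : (mulT w r q).mat r s := by
    rw [mulT_mat, swapNat_left]
    exact ⟨hr1, hr2, hq⟩
  have hvqs'' : (mulT w r q).mat q s'' := by
    rw [mulT_mat, swapNat_right _ _ (by omega : r ≠ q)]
    exact ⟨hq1, hq2, hs''⟩
  have Hw : Ctx n (mulT w r q) r q s s'' :=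
    ⟨hvperm, hrq, hvrs, hvqs'', hss''⟩
  have huw : Hw.u = w := by
    rw [Ctx.u]
    exact mulT_mulT w hr1 hr2 hq1 hq2
  constructor
  · have h := Ctx.Jideal_mono Hw ord
    rwa [huw] at h
  · rintro u₂ ⟨i, ⟨hi1, hir, hcov⟩, rfl⟩
    have hin : i ≤ n := by omega
    obtain ⟨ci, hci⟩ := hvperm.2.2.1 i hi1 hin
    have hcis : ci ≠ s := by
      intro hcon
      have := (mulT w r q).mat_col i r ci hci (hcon ▸ hvrs)
      omega
    have hile : i ≤ (mulT w r q).rows := by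
      rw [hvperm.1]; omega
    have hrle : r ≤ (mulT w r q).rows := by
      rw [hvperm.1]; omega
    have hcilt : ci < s := by
      by_contra hcon
      -- then the transposition would increase rank somewhere, contradicting Bruhat
      have H2 : Ctx n (mulT (mulT w r q) i r) i r s ci := by
        refine ⟨mulT_isPerm hvperm i r hi1 hin hr1 (by omega), hir, ?_, ?_, by omega⟩
        · rw [mulT_mat, swapNat_left]
          exact ⟨hi1, hile, hvrs⟩
        · rw [mulT_mat, swapNat_right _ _ (by omega : i ≠ r)]
          exact ⟨hr1, hrle, hci⟩
      have hflip : H2.u = mulT w r q := by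
        rw [Ctx.u]
        exact mulT_mulT (mulT w r q) hi1 hile hr1 hrle
      have hkey := Ctx.rank_succ_of_B H2 (i := i) (j := s) ⟨le_refl i, hir, le_refl s, by omega⟩
      rw [hflip] at hkey
      have hble := hcov.1.1 i s
      omega
    have H3 : Ctx n (mulT w r q) i r ci s := ⟨hvperm, hir, hci, hvrs, hcilt⟩
    exact Ctx.Jideal_mono H3 ord
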